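/- arXiv:2406.17830 — 4 statements merged into one kernel-verified Lean document; each statement's English description precedes it below -/
import Mathlib

section
/- The one-sided upper Clopper-Pearson confidence interval at level 1-α has coverage at least 1-α: for every p ∈ [0,1], P_{X∼Bin(n,p)}(u(X) ≤ p) ≥ 1-α, where u(x) = inf{q ∈ [0,1] : P(Bin(n,q) ≥ x) > α}. -/
/-!
If `P_p(X ≥ x) > α` then `p` itself lies in the set whose infimum is `u(x)`, so `u(x) ≤ p`.
Hence the interval can only miss `p` on `{x : P_p(X ≥ x) ≤ α}`. Since the tail probability is
antitone in `x`, this set is an upper set `{x ≥ x₀}`, whose probability is `P_p(X ≥ x₀) ≤ α`.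
-/

open Finset

theorem sum_choose_mul_pow_mul_one_sub_pow {R : Type*} [CommRing R] (n : ℕ) (p : R) :
    ∑ x ∈ range (n + 1), (n.choose x : R) * p ^ x * (1 - p) ^ (n - x) = 1 := by
  have h := (add_pow p (1 - p) n).symm
  rw [add_sub_cancel, one_pow] at h
  exact (sum_congr rfl fun x _ => by ring).trans h

section TailWeight

variable {ι : Type*} [LinearOrder ι] (s : Finset ι) (w : ι → ℝ)

theorem sum_filter_tail_le_le (hw : ∀ i ∈ s, 0 ≤ w i) {α : ℝ} (hα : 0 ≤ α) :
    ∑ x ∈ s with ∑ k ∈ s with x ≤ k, w k ≤ α, w x ≤ α := by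
  set T := {x ∈ s | ∑ k ∈ s with x ≤ k, w k ≤ α}
  rcases T.eq_empty_or_nonempty with hT | hT
  · simpa [hT] using hα
  have hmin : T.min' hT ∈ T := T.min'_mem hT
  calc ∑ x ∈ T, w x ≤ ∑ k ∈ s with T.min' hT ≤ k, w k := by
        refine sum_le_sum_of_subset_of_nonneg (fun x hx => ?_) fun i hi _ => hw i (mem_filter.1 hi).1
        exact mem_filter.2 ⟨(mem_filter.1 hx).1, T.min'_le x hx⟩
    _ ≤ α := (mem_filter.1 hmin).2

theorem one_sub_le_sum_filter_lt_tail (hw : ∀ i ∈ s, 0 ≤ w i) (hsum : ∑ i ∈ s, w i = 1)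
    {α : ℝ} (hα : 0 ≤ α) :
    1 - α ≤ ∑ x ∈ s with α < ∑ k ∈ s with x ≤ k, w k, w x := by
  have hsplit := sum_filter_add_sum_filter_not s (fun x => α < ∑ k ∈ s with x ≤ k, w k) w
  simp only [not_lt] at hsplit
  linarith [sum_filter_tail_le_le s w hw hα]

end TailWeight

theorem range_succ_filter_le_eq_Icc (n x : ℕ) : {k ∈ range (n + 1) | x ≤ k} = Icc x n := by
  ext k
  simp only [mem_filter, mem_range, mem_Icc]
  omega

open Classical in
theorem clopper_pearson_coverage_general (n : ℕ) (α : ℝ) (hα : α ∈ Set.Ioo (0 : ℝ) 1)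
    (p : ℝ) (hp : p ∈ Set.Icc (0 : ℝ) 1) :
    1 - α ≤ ∑ x ∈ Finset.range (n + 1),
      (if sInf {q : ℝ | q ∈ Set.Icc (0 : ℝ) 1 ∧
            α < ∑ k ∈ Finset.Icc x n, (n.choose k : ℝ) * q ^ k * (1 - q) ^ (n - k)} ≤ p
       then (n.choose x : ℝ) * p ^ x * (1 - p) ^ (n - x) else 0) := by
  set pmf : ℕ → ℝ := fun x => (n.choose x : ℝ) * p ^ x * (1 - p) ^ (n - x)
  have hpmf : ∀ x ∈ range (n + 1), 0 ≤ pmf x := fun x _ =>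
    mul_nonneg (mul_nonneg (Nat.cast_nonneg _) (pow_nonneg hp.1 _))
      (pow_nonneg (sub_nonneg.2 hp.2) _)
  calc 1 - α ≤ ∑ x ∈ range (n + 1) with α < ∑ k ∈ range (n + 1) with x ≤ k, pmf k, pmf x :=
        one_sub_le_sum_filter_lt_tail _ pmf hpmf (sum_choose_mul_pow_mul_one_sub_pow n p) hα.1.le
    _ = ∑ x ∈ range (n + 1), if α < ∑ k ∈ Icc x n, pmf k then pmf x else 0 := by
        simp only [sum_filter, range_succ_filter_le_eq_Icc]
    _ ≤ _ := sum_le_sum fun x hx => by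
        split_ifs with htail hcover hcover
        · exact le_rfl
        · exact (hcover (csInf_le ⟨0, fun _ hq => hq.1.1⟩ ⟨hp, htail⟩)).elim
        · exact hpmf x hx
        · exact le_rfl

open Classical in
/-- The one-sided upper Clopper-Pearson confidence interval at level `1-α`
has coverage at least `1-α`: for every `p ∈ [0,1]`,
`P_{X∼Bin(n,p)}(u(X) ≤ p) ≥ 1-α`, where `u(x) = inf{q ∈ [0,1] : P(Bin(n,q) ≥ x) > α}`. -/
theorem clopper_pearson_coverage (n : ℕ) (hn : 1 ≤ n) (α : ℝ) (hα : α ∈ Set.Ioo (0 : ℝ) 1)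
    (p : ℝ) (hp : p ∈ Set.Icc (0 : ℝ) 1) :
    1 - α ≤ ∑ x ∈ Finset.range (n + 1),
      (if sInf {q : ℝ | q ∈ Set.Icc (0 : ℝ) 1 ∧
            α < ∑ k ∈ Finset.Icc x n, (n.choose k : ℝ) * q ^ k * (1 - q) ^ (n - k)} ≤ p
       then (n.choose x : ℝ) * p ^ x * (1 - p) ^ (n - x) else 0) :=
  clopper_pearson_coverage_general n α hα p hp
end

section
/- The betting confidence sequence is valid: with X₁, X₂, ... i.i.d. Bernoulli(p), p ∈ (0,1), bets q̂_t = (H_{t-1} + 1/2)/t where H_{t-1} = ∑_{τ<t} X_τ, and logQ_t = ∑_{τ≤t}(X_τ log q̂_τ + (1-X_τ) log(1-q̂_τ)), logP_t(p) = H_t log p + (t - H_t) log(1-p), the probability that there exists a time t with logQ_t - logP_t(p) ≥ log(1/α) is at most α. -/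
open MeasureTheory ProbabilityTheory Finset

/-- The filtration generated by `X 0, ..., X (n-1)` at time `n`. -/
noncomputable def bcsFilt {Ω : Type*} [m0 : MeasurableSpace Ω] (X : ℕ → Ω → ℝ)
    (hmeas : ∀ t, Measurable (X t)) : Filtration ℕ m0 where
  seq n := ⨆ i ∈ {i : ℕ | i < n}, MeasurableSpace.comap (X i) Real.measurableSpace
  mono' := fun _ _ hij => biSup_mono fun _ hk => lt_of_lt_of_le hk hij
  le' := fun _ => iSup₂_le fun i _ => (hmeas i).comap_le

open MeasureTheory ProbabilityTheory in
/-- Validity of the betting confidence sequence. With `X₀, X₁, ...` i.i.d.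
Bernoulli(p), `p ∈ (0,1)`, Krichevsky–Trofimov bets `q̂_τ = (H_{τ-1} + 1/2)/τ` (0-indexed:
the bet for observation `X_τ` is `(∑_{s<τ} X_s + 1/2)/(τ+1)`),
`logQ_t = ∑_{τ<t} (X_τ log q̂_τ + (1-X_τ) log(1-q̂_τ))` and
`logP_t(p) = H_t log p + (t - H_t) log(1-p)`, the probability that there exists a time
`t ≥ 1` with `logQ_t - logP_t(p) ≥ log(1/α)` is at most `α`. -/
theorem betting_confidence_sequence_valid {Ω : Type*} [MeasurableSpace Ω]
    (μ : Measure Ω) [IsProbabilityMeasure μ] (p α : ℝ)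
    (hp : p ∈ Set.Ioo (0 : ℝ) 1) (hα : α ∈ Set.Ioo (0 : ℝ) 1)
    (X : ℕ → Ω → ℝ) (hmeas : ∀ t, Measurable (X t))
    (hval : ∀ t ω, X t ω = 0 ∨ X t ω = 1)
    (hindep : iIndepFun X μ)
    (hbern : ∀ t, μ {ω | X t ω = 1} = ENNReal.ofReal p) :
    μ {ω | ∃ t : ℕ, 1 ≤ t ∧ Real.log (1 / α) ≤
        (∑ τ ∈ Finset.range t,
          (X τ ω * Real.log (((∑ s ∈ Finset.range τ, X s ω) + 1 / 2) / (τ + 1))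
            + (1 - X τ ω) * Real.log (1 - ((∑ s ∈ Finset.range τ, X s ω) + 1 / 2) / (τ + 1))))
        - ((∑ τ ∈ Finset.range t, X τ ω) * Real.log p
            + ((t : ℝ) - ∑ τ ∈ Finset.range t, X τ ω) * Real.log (1 - p))}
      ≤ ENNReal.ofReal α := by
  obtain ⟨hp0, hp1⟩ := hp
  obtain ⟨hα0, hα1⟩ := hα
  have hp1' : (0:ℝ) < 1 - p := by linarith
  -- the bets
  set q : ℕ → Ω → ℝ := fun τ ω => ((∑ s ∈ Finset.range τ, X s ω) + 1 / 2) / (τ + 1) with hq_def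
  -- the wealth factors
  set r : ℕ → Ω → ℝ := fun τ ω =>
    X τ ω * (q τ ω / p) + (1 - X τ ω) * ((1 - q τ ω) / (1 - p)) with hr_def
  -- the wealth process
  set M : ℕ → Ω → ℝ := fun n ω => ∏ τ ∈ Finset.range n, r τ ω with hM_def
  set ℱ := bcsFilt X hmeas with hF_def
  -- bounds on q
  have hq_pos : ∀ τ ω, 0 < q τ ω := by
    intro τ ω
    have h0 : (0:ℝ) ≤ ∑ s ∈ Finset.range τ, X s ω :=
      Finset.sum_nonneg fun s _ => by rcases hval s ω with h | h <;> simp [h]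
    have : (0:ℝ) < (τ:ℝ) + 1 := by positivity
    apply div_pos (by linarith) this
  have hsum_le : ∀ τ ω, (∑ s ∈ Finset.range τ, X s ω) ≤ (τ:ℝ) := by
    intro τ ω
    calc (∑ s ∈ Finset.range τ, X s ω) ≤ ∑ s ∈ Finset.range τ, 1 :=
          Finset.sum_le_sum fun s _ => by rcases hval s ω with h | h <;> simp [h]
      _ = (τ:ℝ) := by simp
  have hq_lt1 : ∀ τ ω, q τ ω < 1 := by
    intro τ ω
    rw [div_lt_one (by positivity)]
    have := hsum_le τ ω
    linarith
  -- r pointwise values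
  have hr1 : ∀ τ ω, X τ ω = 1 → r τ ω = q τ ω / p := by
    intro τ ω h; simp [hr_def, h]
  have hr0 : ∀ τ ω, X τ ω = 0 → r τ ω = (1 - q τ ω) / (1 - p) := by
    intro τ ω h; simp [hr_def, h]
  have hr_pos : ∀ τ ω, 0 < r τ ω := by
    intro τ ω
    rcases hval τ ω with h | h
    · rw [hr0 τ ω h]; exact div_pos (by linarith [hq_lt1 τ ω]) hp1'
    · rw [hr1 τ ω h]; exact div_pos (hq_pos τ ω) hp0
  set C : ℝ := max (1 / p) (1 / (1 - p)) with hC_def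
  have hr_le : ∀ τ ω, r τ ω ≤ C := by
    intro τ ω
    rcases hval τ ω with h | h
    · rw [hr0 τ ω h]
      refine le_trans ?_ (le_max_right _ _)
      gcongr <;> linarith [hq_pos τ ω]
    · rw [hr1 τ ω h]
      refine le_trans ?_ (le_max_left _ _)
      gcongr <;> linarith [hq_lt1 τ ω]
  have hM_nonneg : ∀ n ω, 0 ≤ M n ω :=
    fun n ω => Finset.prod_nonneg fun τ _ => (hr_pos τ ω).le
  have hM_le : ∀ n ω, M n ω ≤ C ^ n := by
    intro n ω
    calc M n ω ≤ ∏ τ ∈ Finset.range n, C :=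
          Finset.prod_le_prod (fun τ _ => (hr_pos τ ω).le) (fun τ _ => hr_le τ ω)
      _ = C ^ n := by simp
  -- measurability
  have hXF : ∀ s n, s < n → Measurable[ℱ n] (X s) := fun s n h =>
    measurable_iff_comap_le.2
      (le_biSup (fun i => MeasurableSpace.comap (X i) Real.measurableSpace) h)
  have hqF : ∀ τ n, τ ≤ n → Measurable[ℱ n] (q τ) := by
    intro τ n h
    apply Measurable.div_const
    apply Measurable.add_const
    exact Finset.measurable_sum _ fun s hs =>
      hXF s n (lt_of_lt_of_le (Finset.mem_range.mp hs) h)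
  have hrF : ∀ τ n, τ < n → Measurable[ℱ n] (r τ) := by
    intro τ n h
    have h1 := hXF τ n h
    have h2 := hqF τ n h.le
    exact ((h1.mul (h2.div_const p)).add
      ((measurable_const.sub h1).mul ((measurable_const.sub h2).div_const (1 - p))))
  have hMF : ∀ n, Measurable[ℱ n] (M n) := by
    intro n
    exact Finset.measurable_prod _ fun τ hτ => hrF τ n (Finset.mem_range.mp hτ)
  have hMm : ∀ n, Measurable (M n) := fun n => (hMF n).mono (ℱ.le n) le_rfl
  have hMint : ∀ n, Integrable (M n) μ := by
    intro n
    refine ⟨(hMm n).aestronglyMeasurable, HasFiniteIntegral.of_bounded (C := C ^ n) ?_⟩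
    filter_upwards with ω
    rw [Real.norm_eq_abs, abs_of_nonneg (hM_nonneg n ω)]
    exact hM_le n ω
  -- independence of X n from ℱ n
  have hIndep : ∀ n, Indep (MeasurableSpace.comap (X n) Real.measurableSpace) (ℱ n) μ := by
    intro n
    have h := indep_biSup_compl (fun i => (hmeas i).comap_le) hindep.iIndep {i : ℕ | i < n}
    exact indep_of_indep_of_le_left h.symm
      (le_biSup (fun i => MeasurableSpace.comap (X i) Real.measurableSpace)
        (by simp : n ∈ {i : ℕ | i < n}ᶜ))
  -- expectation of X n is p
  have hEX : ∀ n, ∫ ω, X n ω ∂μ = p := by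
    intro n
    have hind : (fun ω => X n ω) = Set.indicator {ω | X n ω = 1} (1 : Ω → ℝ) := by
      funext ω
      rcases hval n ω with h | h <;>
        simp [Set.indicator_apply, h, Pi.one_apply]
    have hms : MeasurableSet {ω | X n ω = 1} := (hmeas n) (measurableSet_singleton 1)
    rw [hind, integral_indicator_one hms, measureReal_def, hbern n, ENNReal.toReal_ofReal hp0.le]
  -- conditional expectation of X n given ℱ n
  have hcondX : ∀ n, μ[X n | ℱ n] =ᵐ[μ] fun _ => p := by
    intro n
    have hsm : StronglyMeasurable[MeasurableSpace.comap (X n) Real.measurableSpace] (X n) :=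
      (measurable_iff_comap_le.2 le_rfl).stronglyMeasurable
    have h := condExp_indep_eq (μ := μ) ((hmeas n).comap_le) (ℱ.le n) hsm (hIndep n)
    rw [hEX n] at h
    exact h
  -- generic integrability helper
  have hint_bd : ∀ (f : Ω → ℝ) (K : ℝ), Measurable f → (∀ ω, |f ω| ≤ K) → Integrable f μ :=
    fun f K hf hbd => ⟨hf.aestronglyMeasurable,
      HasFiniteIntegral.of_bounded (C := K) (Filter.Eventually.of_forall hbd)⟩
  have hXbd : ∀ n ω, |X n ω| ≤ 1 := by
    intro n ω; rcases hval n ω with h | h <;> simp [h]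
  have hXint : ∀ n, Integrable (X n) μ := fun n => hint_bd _ 1 (hmeas n) (hXbd n)
  set K : ℝ := 1 / p + 1 / (1 - p) with hK_def
  have hC0 : 0 ≤ C := le_trans (by positivity) (le_max_left (1/p) (1/(1-p)))
  have haux_q : ∀ n ω, |q n ω / p| ≤ 1 / p := by
    intro n ω
    rw [abs_of_nonneg (div_pos (hq_pos n ω) hp0).le]
    gcongr <;> linarith [hq_lt1 n ω]
  have haux_q' : ∀ n ω, |(1 - q n ω) / (1 - p)| ≤ 1 / (1 - p) := by
    intro n ω
    rw [abs_of_nonneg (div_pos (by linarith [hq_lt1 n ω]) hp1').le]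
    gcongr <;> linarith [hq_pos n ω]
  -- the martingale property
  have hstep : ∀ n, M n =ᵐ[μ] μ[M (n + 1) | ℱ n] := by
    intro n
    set a : Ω → ℝ := fun ω => q n ω / p - (1 - q n ω) / (1 - p) with ha_def
    set G : Ω → ℝ := fun ω => M n ω * a ω with hG_def
    set B : Ω → ℝ := fun ω => M n ω * ((1 - q n ω) / (1 - p)) with hB_def
    have hsplit : M (n + 1) = G * X n + B := by
      funext ω
      simp only [hM_def, Finset.prod_range_succ, hG_def, hB_def, ha_def, hr_def,
        Pi.add_apply, Pi.mul_apply]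
      ring
    have haF : Measurable[ℱ n] a :=
      ((hqF n n le_rfl).div_const p).sub ((measurable_const.sub (hqF n n le_rfl)).div_const (1 - p))
    have hGF : Measurable[ℱ n] G := (hMF n).mul haF
    have hBF : Measurable[ℱ n] B :=
      (hMF n).mul ((measurable_const.sub (hqF n n le_rfl)).div_const (1 - p))
    have hGbd : ∀ ω, |G ω| ≤ C ^ n * K := by
      intro ω
      rw [hG_def, abs_mul]
      apply mul_le_mul ?_ ?_ (abs_nonneg _) (by positivity)
      · rw [abs_of_nonneg (hM_nonneg n ω)]; exact hM_le n ω
      · rw [ha_def, hK_def]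
        exact le_trans (abs_sub _ _) (add_le_add (haux_q n ω) (haux_q' n ω))
    have hBbd : ∀ ω, |B ω| ≤ C ^ n * (1 / (1 - p)) := by
      intro ω
      rw [hB_def, abs_mul]
      apply mul_le_mul ?_ (haux_q' n ω) (abs_nonneg _) (by positivity)
      rw [abs_of_nonneg (hM_nonneg n ω)]; exact hM_le n ω
    have hGm : Measurable G := hGF.mono (ℱ.le n) le_rfl
    have hBm : Measurable B := hBF.mono (ℱ.le n) le_rfl
    have hGXint : Integrable (G * X n) μ := by
      refine hint_bd _ (C ^ n * K) (hGm.mul (hmeas n)) fun ω => ?_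
      rw [Pi.mul_apply, abs_mul]
      calc |G ω| * |X n ω| ≤ (C ^ n * K) * 1 :=
            mul_le_mul (hGbd ω) (hXbd n ω) (abs_nonneg _) (by positivity)
        _ = C ^ n * K := mul_one _
    have hBint : Integrable B μ := hint_bd _ _ hBm hBbd
    have h1 : μ[M (n + 1) | ℱ n] =ᵐ[μ] μ[G * X n | ℱ n] + μ[B | ℱ n] := by
      rw [hsplit]; exact condExp_add hGXint hBint _
    have h2 : μ[G * X n | ℱ n] =ᵐ[μ] G * μ[X n | ℱ n] :=
      condExp_mul_of_stronglyMeasurable_left hGF.stronglyMeasurable hGXint (hXint n)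
    have h3 := hcondX n
    have h4 : μ[B | ℱ n] = B :=
      condExp_of_stronglyMeasurable (ℱ.le n) hBF.stronglyMeasurable hBint
    filter_upwards [h1, h2, h3] with ω e1 e2 e3
    rw [e1, Pi.add_apply, e2, Pi.mul_apply, e3, h4]
    show M n ω = M n ω * a ω * p + M n ω * ((1 - q n ω) / (1 - p))
    have key : a ω * p + (1 - q n ω) / (1 - p) = 1 := by
      rw [ha_def]
      field_simp
      ring
    calc M n ω = M n ω * (a ω * p + (1 - q n ω) / (1 - p)) := by rw [key, mul_one]
      _ = M n ω * a ω * p + M n ω * ((1 - q n ω) / (1 - p)) := by ring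
  have hmart : Martingale M ℱ μ :=
    martingale_nat (fun n => (hMF n).stronglyMeasurable) hMint hstep
  have hEM : ∀ n, ∫ ω, M n ω ∂μ = 1 := by
    intro n
    induction n with
    | zero => simp [hM_def]
    | succ n ih =>
      calc ∫ ω, M (n + 1) ω ∂μ = ∫ ω, (μ[M (n + 1) | ℱ n]) ω ∂μ :=
            (integral_condExp (ℱ.le n)).symm
        _ = ∫ ω, M n ω ∂μ := integral_congr_ae (hstep n).symm
        _ = 1 := ih
  -- Doob/Ville maximal inequality
  set ε : NNReal := Real.toNNReal (1 / α) with hε_def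
  have hεR : (ε : ℝ) = 1 / α := Real.coe_toNNReal _ (by positivity)
  set A : ℕ → Set Ω := fun n => {ω | (ε : ℝ) ≤
    (Finset.range (n + 1)).sup' Finset.nonempty_range_add_one fun k => M k ω} with hA_def
  have hA_bd : ∀ n, μ (A n) ≤ ENNReal.ofReal α := by
    intro n
    have h := maximal_ineq hmart.submartingale (fun n ω => hM_nonneg n ω) (ε := ε) n
    have h2 : ENNReal.ofReal (∫ ω in A n, M n ω ∂μ) ≤ 1 := by
      refine le_trans (ENNReal.ofReal_le_ofReal
        (setIntegral_le_integral (hMint n) (Filter.Eventually.of_forall (hM_nonneg n)))) ?_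
      rw [hEM n]; simp
    have h3 : (ε : ENNReal) * μ (A n) ≤ 1 := by
      refine le_trans ?_ (le_trans h h2)
      exact le_rfl
    set c : ENNReal := ENNReal.ofReal α with hc_def
    have hc0 : c ≠ 0 := by simp [hc_def, hα0]
    have hctop : c ≠ ⊤ := ENNReal.ofReal_ne_top
    have hεc : (ε : ENNReal) = c⁻¹ := by
      rw [hc_def, ← ENNReal.ofReal_inv_of_pos hα0]
      rw [hε_def, one_div]
      rfl
    rw [hεc] at h3
    calc μ (A n) = c * c⁻¹ * μ (A n) := by rw [ENNReal.mul_inv_cancel hc0 hctop, one_mul]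
      _ = c * (c⁻¹ * μ (A n)) := mul_assoc _ _ _
      _ ≤ c * 1 := mul_le_mul_right h3 c
      _ = c := mul_one c
  -- the target event is contained in the union of the A n
  have hsubset : {ω : Ω | ∃ t : ℕ, 1 ≤ t ∧ Real.log (1 / α) ≤
        (∑ τ ∈ Finset.range t,
          (X τ ω * Real.log (q τ ω) + (1 - X τ ω) * Real.log (1 - q τ ω)))
        - ((∑ τ ∈ Finset.range t, X τ ω) * Real.log p
            + ((t : ℝ) - ∑ τ ∈ Finset.range t, X τ ω) * Real.log (1 - p))}
      ⊆ ⋃ n, A n := by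
    rintro ω ⟨t, ht1, hlog⟩
    refine Set.mem_iUnion.2 ⟨t, ?_⟩
    show (ε : ℝ) ≤ _
    refine le_trans ?_ (Finset.le_sup' (fun k => M k ω)
      (Finset.mem_range.2 (Nat.lt_succ_self t)))
    rw [hεR]
    -- rewrite the log expression as a single sum
    have hrw : (∑ τ ∈ Finset.range t,
          (X τ ω * Real.log (q τ ω) + (1 - X τ ω) * Real.log (1 - q τ ω)))
        - ((∑ τ ∈ Finset.range t, X τ ω) * Real.log p
            + ((t : ℝ) - ∑ τ ∈ Finset.range t, X τ ω) * Real.log (1 - p))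
        = ∑ τ ∈ Finset.range t,
          (X τ ω * Real.log (q τ ω) + (1 - X τ ω) * Real.log (1 - q τ ω)
            - (X τ ω * Real.log p + (1 - X τ ω) * Real.log (1 - p))) := by
      have h1 : ((∑ τ ∈ Finset.range t, X τ ω) : ℝ) * Real.log p
          = ∑ τ ∈ Finset.range t, X τ ω * Real.log p := Finset.sum_mul _ _ _
      have h2 : ((t : ℝ) - ∑ τ ∈ Finset.range t, X τ ω) * Real.log (1 - p)
          = ∑ τ ∈ Finset.range t, (1 - X τ ω) * Real.log (1 - p) := by
        rw [← Finset.sum_mul]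
        congr 1
        rw [Finset.sum_sub_distrib]
        simp
      rw [h1, h2]
      simp only [Finset.sum_sub_distrib, Finset.sum_add_distrib]
    have hexp : Real.exp (∑ τ ∈ Finset.range t,
          (X τ ω * Real.log (q τ ω) + (1 - X τ ω) * Real.log (1 - q τ ω)
            - (X τ ω * Real.log p + (1 - X τ ω) * Real.log (1 - p)))) = M t ω := by
      rw [Real.exp_sum]
      refine Finset.prod_congr rfl fun τ _ => ?_
      rcases hval τ ω with h | h
      · rw [hr0 τ ω h, h]
        rw [show (0:ℝ) * Real.log (q τ ω) + (1 - 0) * Real.log (1 - q τ ω)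
            - (0 * Real.log p + (1 - 0) * Real.log (1 - p))
            = Real.log (1 - q τ ω) - Real.log (1 - p) by ring]
        rw [← Real.log_div (by linarith [hq_lt1 τ ω]) hp1'.ne']
        exact Real.exp_log (div_pos (by linarith [hq_lt1 τ ω]) hp1')
      · rw [hr1 τ ω h, h]
        rw [show (1:ℝ) * Real.log (q τ ω) + (1 - 1) * Real.log (1 - q τ ω)
            - (1 * Real.log p + (1 - 1) * Real.log (1 - p))
            = Real.log (q τ ω) - Real.log p by ring]
        rw [← Real.log_div (hq_pos τ ω).ne' hp0.ne']
        exact Real.exp_log (div_pos (hq_pos τ ω) hp0)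
    rw [hrw] at hlog
    calc 1 / α = Real.exp (Real.log (1 / α)) := (Real.exp_log (by positivity)).symm
      _ ≤ Real.exp _ := Real.exp_le_exp.2 hlog
      _ = M t ω := hexp
  have hmono : Monotone A := by
    intro i j hij ω hω
    exact le_trans hω (Finset.sup'_mono (fun k => M k ω)
      (Finset.range_subset_range.2 (by omega)) Finset.nonempty_range_add_one)
  calc μ _ ≤ μ (⋃ n, A n) := measure_mono hsubset
    _ = ⨆ n, μ (A n) := hmono.directed_le.measure_iUnion
    _ ≤ ENNReal.ofReal α := iSup_le hA_bd
end

section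
/- KT regret bound: for any binary sequence x₁,...,x_t with H ones, the log-loss of the Krichevsky–Trofimov estimator exceeds the best constant-predictor log-loss by at most (1/2)log t + log 2; i.e., logQ_t ≥ H log(H/t) + (t-H) log((t-H)/t) - (1/2)log t - log 2, where logQ_t = ∑_τ (x_τ log q̂_τ + (1-x_τ)log(1-q̂_τ)) with q̂_τ = (h_{τ-1}+1/2)/τ. -/
/-!
The KT predictive probabilities telescope: the KT log-likelihood of a binary sequence with
`h` ones and `z` zeros is `log ((1/2)_h (1/2)_z / (h+z)!)`, whatever the order of the symbols.
Writing `gap k = k log k - k - log (1/2)_k`, the bound becomes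
`gap h + gap z ≤ log 2 + ((t + 1/2) log t - t - log t!)`.
The sequence `gap` is nonincreasing, by an elementary inequality for `log (1 + x)`, so the left
side is at most `gap 1 + gap 0 = log 2 - 1`; and the monotonicity of Stirling's sequence
gives `log t! ≤ (t + 1/2) log t - t + 1`.
-/

open Real Finset

namespace Real

theorem one_add_mul_log_one_add_le {x : ℝ} (hx : 0 ≤ x) :
    (1 + x) * log (1 + x) ≤ x * log (1 + x / 2) + x := by
  let f : ℝ → ℝ := fun y ↦ (1 + y) * log (1 + y) - y * log (1 + y / 2) - y
  suffices AntitoneOn f (Set.Ici 0) by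
    have := this Set.self_mem_Ici hx hx
    simp only [f] at this
    norm_num at this
    linarith
  have hderiv (y : ℝ) (hy : 0 ≤ y) : HasDerivAt f
      (log (1 + y) - log (1 + y / 2) - ((1 + y) / (1 + y / 2) - 1)) y := by
    have h1 : HasDerivAt (fun y : ℝ ↦ log (1 + y)) (1 / (1 + y)) y := by
      simpa using ((hasDerivAt_id y).const_add 1).log (by positivity)
    have h2 : HasDerivAt (fun y : ℝ ↦ log (1 + y / 2)) ((1 / 2) / (1 + y / 2)) y := by
      simpa using (((hasDerivAt_id y).div_const 2).const_add 1).log (by positivity)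
    refine ((((hasDerivAt_id y).const_add 1).mul h1).sub ((hasDerivAt_id y).mul h2)).sub
      (hasDerivAt_id y) |>.congr_deriv ?_
    simp only [id]
    field_simp
    ring
  refine antitoneOn_of_hasDerivWithinAt_nonpos (convex_Ici 0)
    (fun y hy ↦ (hderiv y hy).continuousAt.continuousWithinAt)
    (fun y hy ↦ (hderiv y (by simp at hy; exact hy.le)).hasDerivWithinAt) fun y hy ↦ ?_
  have hy : 0 < y := by simpa using hy
  rw [← log_div (by positivity) (by positivity)]
  linarith [log_le_sub_one_of_pos (show 0 < (1 + y) / (1 + y / 2) by positivity)]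

theorem log_factorial_le {n : ℕ} (hn : n ≠ 0) :
    log n.factorial ≤ (n + 1 / 2) * log n - n + 1 := by
  obtain ⟨m, rfl⟩ := Nat.exists_eq_succ_of_ne_zero hn
  have h := Stirling.log_stirlingSeq'_antitone (Nat.zero_le m)
  simp only [Function.comp, Nat.succ_eq_add_one, zero_add, Stirling.stirlingSeq_one,
    Stirling.log_stirlingSeq_formula] at h
  rw [log_div (exp_pos 1).ne' (by positivity), log_exp, log_sqrt (by norm_num),
    log_mul (by norm_num) (by positivity), log_div (by positivity) (exp_pos 1).ne', log_exp] at h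
  push_cast [Nat.succ_eq_add_one] at h ⊢
  linarith

theorem log_factorial_succ (n : ℕ) :
    log (n + 1).factorial = log n.factorial + log (n + 1) := by
  rw [Nat.factorial_succ, Nat.cast_mul, log_mul (by positivity) (by positivity), add_comm]
  push_cast
  ring

theorem mul_log_div_eq (a : ℝ) {b : ℝ} (hb : b ≠ 0) :
    a * log (a / b) = a * log a - a * log b := by
  rcases eq_or_ne a 0 with rfl | ha
  · simp
  · rw [log_div ha hb]
    ring

end Real

namespace KT

noncomputable section

def estimate (x : ℕ → ℝ) (τ : ℕ) : ℝ := ((∑ s ∈ range τ, x s) + 1 / 2) / (τ + 1)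

def logLik (x : ℕ → ℝ) (n : ℕ) : ℝ :=
  ∑ τ ∈ range n, (x τ * log (estimate x τ) + (1 - x τ) * log (1 - estimate x τ))

def logPochhammerHalf (k : ℕ) : ℝ := ∑ i ∈ range k, log (i + 1 / 2)

/-- The KT log-probability of any binary sequence with `h` ones and `z` zeros. -/
def logProb (h z : ℕ) : ℝ := logPochhammerHalf h + logPochhammerHalf z - log (h + z).factorial

def gap (k : ℕ) : ℝ := k * log k - k - logPochhammerHalf k

end

theorem logLik_succ (x : ℕ → ℝ) (n : ℕ) : logLik x (n + 1) =
    logLik x n + (x n * log (estimate x n) + (1 - x n) * log (1 - estimate x n)) :=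
  sum_range_succ _ _

theorem logProb_succ_left (h z : ℕ) :
    logProb (h + 1) z = logProb h z + log ((h + 1 / 2) / (h + z + 1)) := by
  simp only [logProb, logPochhammerHalf, sum_range_succ]
  rw [log_div (by positivity) (by positivity), Nat.add_right_comm, log_factorial_succ]
  push_cast
  ring

theorem logProb_succ_right (h z : ℕ) :
    logProb h (z + 1) = logProb h z + log (1 - (h + 1 / 2) / (h + z + 1)) := by
  have : 1 - (h + 1 / 2 : ℝ) / (h + z + 1) = (z + 1 / 2) / (h + z + 1) := by
    field_simp
    ring
  simp only [logProb, logPochhammerHalf, sum_range_succ]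
  rw [this, log_div (by positivity) (by positivity), ← Nat.add_assoc, log_factorial_succ]
  push_cast
  ring

theorem exists_logLik_eq_logProb {x : ℕ → ℝ} (hx : ∀ τ, x τ = 0 ∨ x τ = 1) (n : ℕ) :
    ∃ h z : ℕ, h + z = n ∧ ∑ s ∈ range n, x s = h ∧ logLik x n = logProb h z := by
  induction n with
  | zero => exact ⟨0, 0, rfl, by simp, by simp [logLik, logProb, logPochhammerHalf]⟩
  | succ n ih =>
    obtain ⟨h, z, rfl, hsum, hlik⟩ := ih
    have hest : estimate x (h + z) = (h + 1 / 2) / (h + z + 1) := by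
      rw [estimate, hsum]
      push_cast
      ring
    rw [logLik_succ, hlik, sum_range_succ, hsum, hest]
    rcases hx (h + z) with hzero | hone
    · refine ⟨h, z + 1, by ring, by simp [hzero], ?_⟩
      rw [hzero, logProb_succ_right]
      ring
    · refine ⟨h + 1, z, by ring, by simp [hone], ?_⟩
      rw [hone, logProb_succ_left]
      ring

theorem gap_succ_le (k : ℕ) : gap (k + 1) ≤ gap k := by
  suffices (k + 1) * log (k + 1) ≤ k * log k + log (k + 1 / 2) + 1 by
    simp only [gap, logPochhammerHalf, sum_range_succ]
    push_cast
    linarith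
  rcases Nat.eq_zero_or_pos k with rfl | hk
  · have := log_le_sub_one_of_pos (show (0 : ℝ) < 2 by norm_num)
    rw [show ((0 : ℕ) : ℝ) + 1 / 2 = 2⁻¹ by norm_num, log_inv]
    simp only [Nat.cast_zero, zero_add, log_one, mul_zero, zero_mul]
    linarith
  have hk : (0 : ℝ) < k := by exact_mod_cast hk
  have key := one_add_mul_log_one_add_le (x := 1 / k) (by positivity)
  rw [show 1 + 1 / (k : ℝ) = (k + 1) / k by field_simp,
    show 1 + 1 / (k : ℝ) / 2 = (k + 1 / 2) / k by field_simp,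
    log_div (by positivity) hk.ne', log_div (by positivity) hk.ne'] at key
  set A := log ((k : ℝ) + 1)
  set B := log (k : ℝ)
  set C := log ((k : ℝ) + 1 / 2)
  calc (k + 1) * A = k * ((k + 1) / k * (A - B)) + (k + 1) * B := by field_simp; ring
    _ ≤ k * (1 / k * (C - B) + 1 / k) + (k + 1) * B := by gcongr
    _ = k * B + C + 1 := by field_simp; ring

theorem gap_antitone : Antitone gap := antitone_nat_of_succ_le gap_succ_le

theorem gap_add_gap_le {h z : ℕ} (hhz : h + z ≠ 0) : gap h + gap z ≤ log 2 - 1 := by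
  have gap_zero : gap 0 = 0 := by simp [gap, logPochhammerHalf]
  have gap_one : gap 1 = log 2 - 1 := by simp [gap, logPochhammerHalf, log_inv]; ring
  wlog hh : h ≠ 0 generalizing h z
  · rw [add_comm]
    exact this (by omega) (by omega)
  linarith [gap_antitone (Nat.one_le_iff_ne_zero.2 hh), gap_antitone (Nat.zero_le z)]

theorem le_logProb {h z : ℕ} (hhz : h + z ≠ 0) :
    h * log (h / (h + z)) + z * log (z / (h + z)) - 1 / 2 * log (h + z) - log 2
      ≤ logProb h z := by
  have hpos : (h + z : ℝ) ≠ 0 := by exact_mod_cast hhz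
  have hfact := log_factorial_le hhz
  have hgap := gap_add_gap_le hhz
  rw [mul_log_div_eq _ hpos, mul_log_div_eq _ hpos]
  simp only [gap, logProb] at hgap ⊢
  push_cast at hfact
  linarith

end KT

/-- KT regret bound: for any binary sequence `x₀,...,x_{t-1}` with `H` ones,
the log-loss of the Krichevsky–Trofimov estimator exceeds the best constant-predictor
log-loss by at most `(1/2)log t + log 2`; i.e.
`logQ_t ≥ H log(H/t) + (t-H) log((t-H)/t) - (1/2)log t - log 2`, where
`logQ_t = ∑_τ (x_τ log q̂_τ + (1-x_τ)log(1-q̂_τ))` with `q̂_τ = (∑_{s<τ} x_s + 1/2)/(τ+1)`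
(0-indexed). Terms with `H = 0` or `H = t` use the convention `0·log 0 = 0`, which holds
automatically since `Real.log 0 = 0`. -/
theorem kt_regret_bound (t : ℕ) (ht : 1 ≤ t) (x : ℕ → ℝ) (hx : ∀ τ, x τ = 0 ∨ x τ = 1) :
    (∑ τ ∈ Finset.range t, x τ) * Real.log ((∑ τ ∈ Finset.range t, x τ) / t)
      + ((t : ℝ) - ∑ τ ∈ Finset.range t, x τ)
          * Real.log (((t : ℝ) - ∑ τ ∈ Finset.range t, x τ) / t)
      - (1 / 2) * Real.log t - Real.log 2
    ≤ ∑ τ ∈ Finset.range t,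
        (x τ * Real.log (((∑ s ∈ Finset.range τ, x s) + 1 / 2) / (τ + 1))
          + (1 - x τ) * Real.log (1 - ((∑ s ∈ Finset.range τ, x s) + 1 / 2) / (τ + 1))) := by
  obtain ⟨h, z, rfl, hsum, hlik⟩ := KT.exists_logLik_eq_logProb hx t
  change _ ≤ KT.logLik x (h + z)
  rw [hlik, hsum]
  push_cast
  rw [add_sub_cancel_left]
  exact KT.le_logProb (by omega)
end

section
/- Width bound for the betting confidence sequence: there is a universal constant C such that for all t ≥ 2 and α ∈ (0,1), the confidence interval {p ∈ (0,1) : logQ_t - H log p - (t-H) log(1-p) ≤ log(1/α)} produced by the KT betting scheme has width at most C·√((log(1/α) + log t)/t). -/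
open Finset

noncomputable def ktN (k : ℕ) : ℝ := ∏ i ∈ Finset.range k, ((i:ℝ) + 1/2)

lemma ktN_pos (k : ℕ) : 0 < ktN k := by
  unfold ktN; exact Finset.prod_pos (fun i _ => by positivity)

lemma ktN_succ (k : ℕ) : ktN (k+1) = ktN k * ((k:ℝ) + 1/2) := by
  unfold ktN; rw [Finset.prod_range_succ]

lemma factorial_le_ktN (k : ℕ) : (k.factorial : ℝ) ≤ (2*(k:ℝ)+1) * ktN k := by
  induction k with
  | zero => simp [ktN]
  | succ k ih =>
    have hN := ktN_pos k
    rw [ktN_succ]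
    push_cast [Nat.factorial_succ]
    nlinarith [ih, hN]

lemma pmf_le_one (t h : ℕ) (hh : h ≤ t) (ht : 0 < t) :
    (t.choose h : ℝ) * ((h:ℝ)/t)^h * (((t-h : ℕ):ℝ)/t)^(t-h) ≤ 1 := by
  set a : ℝ := (h:ℝ)/t
  set b : ℝ := ((t-h : ℕ):ℝ)/t
  have htR : (0:ℝ) < t := by exact_mod_cast ht
  have hab : a + b = 1 := by
    rw [← add_div, Nat.cast_sub hh]
    field_simp
    ring
  have ha : 0 ≤ a := by positivity
  have hb : 0 ≤ b := by positivity
  have hexp := add_pow a b t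
  rw [hab, one_pow] at hexp
  have hmem : h ∈ Finset.range (t+1) := Finset.mem_range.mpr (Nat.lt_succ_of_le hh)
  have := Finset.single_le_sum (f := fun k => a ^ k * b ^ (t - k) * (t.choose k : ℝ))
    (fun k _ => by positivity) hmem
  rw [← hexp] at this
  calc (t.choose h : ℝ) * a^h * b^(t-h) = a ^ h * b ^ (t - h) * (t.choose h : ℝ) := by ring
    _ ≤ 1 := this

lemma wealth_eq (x : ℕ → ℝ) (hx : ∀ τ, x τ = 0 ∨ x τ = 1) (t : ℕ) :
    ∃ h : ℕ, h ≤ t ∧ (∑ s ∈ Finset.range t, x s) = (h:ℝ) ∧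
      (∑ τ ∈ Finset.range t,
          (x τ * Real.log (((∑ s ∈ Finset.range τ, x s) + 1 / 2) / (τ + 1))
            + (1 - x τ) * Real.log (1 - ((∑ s ∈ Finset.range τ, x s) + 1 / 2) / (τ + 1))))
        = Real.log (ktN h * ktN (t-h) / t.factorial) := by
  induction t with
  | zero => exact ⟨0, le_refl 0, by simp, by simp [ktN]⟩
  | succ t ih =>
    obtain ⟨h, hht, hsum, hS⟩ := ih
    have htpos : (0:ℝ) < (t:ℝ) + 1 := by positivity
    have hfac : ((t+1).factorial : ℝ) = (t.factorial : ℝ) * ((t:ℝ)+1) := by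
      push_cast [Nat.factorial_succ]; ring
    have hfpos : (0:ℝ) < (t.factorial : ℝ) := by exact_mod_cast t.factorial_pos
    rcases hx t with h0 | h1
    · -- x t = 0
      refine ⟨h, Nat.le_succ_of_le hht, ?_, ?_⟩
      · rw [Finset.sum_range_succ, hsum, h0, add_zero]
      · rw [Finset.sum_range_succ, hS, hsum, h0]
        have hth : t + 1 - h = (t - h) + 1 := by omega
        rw [hth, ktN_succ]
        have hcast : ((t - h : ℕ):ℝ) = (t:ℝ) - (h:ℝ) := by
          push_cast [Nat.cast_sub hht]; ring
        have harg : 1 - ((h:ℝ) + 1/2) / ((t:ℝ)+1) = (((t-h:ℕ):ℝ) + 1/2) / ((t:ℝ)+1) := by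
          rw [hcast]; field_simp; ring
        rw [harg]
        have hQ : (0:ℝ) < ktN h * ktN (t-h) / t.factorial :=
          div_pos (mul_pos (ktN_pos h) (ktN_pos (t-h))) hfpos
        have e1 : (0:ℝ) < (((t-h:ℕ):ℝ) + 1/2) / ((t:ℝ)+1) := by positivity
        norm_num
        rw [← Real.log_mul (ne_of_gt hQ) (ne_of_gt e1)]
        congr 1
        rw [hfac]
        field_simp
    · -- x t = 1
      refine ⟨h+1, by omega, ?_, ?_⟩
      · rw [Finset.sum_range_succ, hsum, h1]; push_cast; ring
      · rw [Finset.sum_range_succ, hS, hsum, h1]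
        have hth : t + 1 - (h+1) = t - h := by omega
        rw [hth, ktN_succ]
        have hQ : (0:ℝ) < ktN h * ktN (t-h) / t.factorial :=
          div_pos (mul_pos (ktN_pos h) (ktN_pos (t-h))) hfpos
        have e1 : (0:ℝ) < ((h:ℝ) + 1/2) / ((t:ℝ)+1) := by positivity
        norm_num
        rw [← Real.log_mul (ne_of_gt hQ) (ne_of_gt e1)]
        congr 1
        rw [hfac]
        field_simp

lemma sqrtB_bound (a p : ℝ) (ha0 : 0 ≤ a) (ha1 : a ≤ 1) (hp0 : 0 ≤ p) (hp1 : p ≤ 1) :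
    Real.sqrt a * Real.sqrt p + Real.sqrt (1-a) * Real.sqrt (1-p) ≤ 1 - (a-p)^2/8 := by
  have ha1' : (0:ℝ) ≤ 1 - a := by linarith
  have hp1' : (0:ℝ) ≤ 1 - p := by linarith
  set ra : ℝ := Real.sqrt a with hra
  set rp : ℝ := Real.sqrt p with hrp
  set rb : ℝ := Real.sqrt (1-a) with hrb
  set rq : ℝ := Real.sqrt (1-p) with hrq
  have hsa2 : ra^2 = a := Real.sq_sqrt ha0
  have hsp2 : rp^2 = p := Real.sq_sqrt hp0
  have hsb2 : rb^2 = 1-a := Real.sq_sqrt ha1'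
  have hsq2 : rq^2 = 1-p := Real.sq_sqrt hp1'
  have hsa0 : 0 ≤ ra := Real.sqrt_nonneg _
  have hsp0 : 0 ≤ rp := Real.sqrt_nonneg _
  have hsb0 : 0 ≤ rb := Real.sqrt_nonneg _
  have hsq0 : 0 ≤ rq := Real.sqrt_nonneg _
  have hsa1 : ra ≤ 1 := Real.sqrt_le_one.mpr ha1
  have hsp1 : rp ≤ 1 := Real.sqrt_le_one.mpr hp1
  clear_value ra rp rb rq
  have e : a - p = (ra - rp) * (ra + rp) := by
    rw [← hsa2, ← hsp2]; ring
  rw [e]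
  have k1 : (ra - rp)^2 + (rb - rq)^2 = 2 - 2*(ra*rp + rb*rq) := by
    linear_combination hsa2 + hsp2 + hsb2 + hsq2
  have h4 : (ra + rp)^2 ≤ 4 := by nlinarith
  have k2 : (ra-rp)^2 * (ra+rp)^2 ≤ (ra-rp)^2 * 4 :=
    mul_le_mul_of_nonneg_left h4 (sq_nonneg _)
  nlinarith [sq_nonneg (rb - rq), k1, k2]

lemma pinsker_quarter (a p : ℝ) (ha : a ∈ Set.Icc (0:ℝ) 1) (hp : p ∈ Set.Ioo (0:ℝ) 1) :
    (a - p)^2 / 4 ≤ a * Real.log a + (1-a) * Real.log (1-a)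
      - a * Real.log p - (1-a) * Real.log (1-p) := by
  obtain ⟨ha0, ha1⟩ := ha
  obtain ⟨hp0, hp1⟩ := hp
  have hp1' : 0 < 1 - p := by linarith
  rcases eq_or_lt_of_le ha0 with h0 | h0
  · -- a = 0
    have hlog := Real.log_le_sub_one_of_pos hp1'
    rw [← h0]
    norm_num
    nlinarith [sq_nonneg p]
  rcases eq_or_lt_of_le ha1 with h1 | h1
  · -- a = 1
    have hlog := Real.log_le_sub_one_of_pos hp0
    rw [h1]
    norm_num
    nlinarith [sq_nonneg (1-p)]
  · -- 0 < a < 1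
    have ha1' : 0 < 1 - a := by linarith
    set u : ℝ := Real.sqrt (p / a) with hu_def
    set v : ℝ := Real.sqrt ((1-p)/(1-a)) with hv_def
    have hu : 0 < u := Real.sqrt_pos.mpr (by positivity)
    have hv : 0 < v := Real.sqrt_pos.mpr (by positivity)
    have amgm := Real.geom_mean_le_arith_mean2_weighted h0.le ha1'.le hu.le hv.le
      (by ring : a + (1 - a) = 1)
    have hlhs : Real.log (u ^ a * v ^ (1-a)) = a * Real.log u + (1-a) * Real.log v := by
      rw [Real.log_mul (by positivity) (by positivity),
        Real.log_rpow hu, Real.log_rpow hv]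
    have hlogu : Real.log u = (Real.log p - Real.log a) / 2 := by
      rw [hu_def, Real.log_sqrt (by positivity), Real.log_div (ne_of_gt hp0) (ne_of_gt h0)]
    have hlogv : Real.log v = (Real.log (1-p) - Real.log (1-a)) / 2 := by
      rw [hv_def, Real.log_sqrt (by positivity), Real.log_div (ne_of_gt hp1') (ne_of_gt ha1')]
    set B : ℝ := a * u + (1-a) * v with hB_def
    have hBpos : 0 < B := by positivity
    have h1' : a * Real.log u + (1-a) * Real.log v ≤ Real.log B := by
      rw [← hlhs]
      exact Real.log_le_log (by positivity) amgm
    have h2 : Real.log B ≤ B - 1 := Real.log_le_sub_one_of_pos hBpos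
    -- rewrite B with square roots
    set ra : ℝ := Real.sqrt a with hra_def
    set rp : ℝ := Real.sqrt p with hrp_def
    set rb : ℝ := Real.sqrt (1-a) with hrb_def
    set rq : ℝ := Real.sqrt (1-p) with hrq_def
    have hsa2 : ra^2 = a := Real.sq_sqrt ha0
    have hsp2 : rp^2 = p := Real.sq_sqrt hp0.le
    have hsb2 : rb^2 = 1-a := Real.sq_sqrt ha1'.le
    have hsq2 : rq^2 = 1-p := Real.sq_sqrt hp1'.le
    have hsa0 : 0 < ra := Real.sqrt_pos.mpr h0
    have hsb0 : 0 < rb := Real.sqrt_pos.mpr ha1'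
    have hsp0 : 0 ≤ rp := Real.sqrt_nonneg _
    have hsq0 : 0 ≤ rq := Real.sqrt_nonneg _
    have hsa1 : ra ≤ 1 := Real.sqrt_le_one.mpr ha1
    have hsp1 : rp ≤ 1 := Real.sqrt_le_one.mpr hp1.le
    clear_value ra rp rb rq
    have hau : a * u = ra * rp := by
      rw [hu_def, Real.sqrt_div hp0.le, hrp_def.symm, ← hsa2,
        Real.sqrt_sq hsa0.le]
      field_simp
    have hbv : (1-a) * v = rb * rq := by
      rw [hv_def, Real.sqrt_div hp1'.le, hrq_def.symm, ← hsb2,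
        Real.sqrt_sq hsb0.le]
      field_simp
    have hBle : B ≤ 1 - (a-p)^2/8 := by
      rw [hB_def, hau, hbv, hra_def, hrp_def, hrb_def, hrq_def]
      exact sqrtB_bound a p ha0 ha1 hp0.le hp1.le
    have hcomb : (Real.log p - Real.log a) / 2 * a + (Real.log (1-p) - Real.log (1-a)) / 2 * (1-a)
        ≤ -(a-p)^2/8 := by
      calc (Real.log p - Real.log a) / 2 * a + (Real.log (1-p) - Real.log (1-a)) / 2 * (1-a)
          = a * Real.log u + (1-a) * Real.log v := by rw [hlogu, hlogv]; ring
        _ ≤ B - 1 := le_trans h1' h2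
        _ ≤ -(a-p)^2/8 := by linarith
    linarith

lemma kt_regret (t h : ℕ) (hh : h ≤ t) (ht : 0 < t) :
    (h:ℝ) * Real.log ((h:ℝ)/t) + ((t-h:ℕ):ℝ) * Real.log (((t-h:ℕ):ℝ)/t)
      - 2 * Real.log (2*(t:ℝ)+1)
    ≤ Real.log (ktN h * ktN (t-h) / t.factorial) := by
  have htR : (0:ℝ) < t := by exact_mod_cast ht
  set a : ℝ := (h:ℝ)/t with ha_def
  set b : ℝ := ((t-h:ℕ):ℝ)/t with hb_def
  have hT : (0:ℝ) < 2*(t:ℝ)+1 := by positivity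
  have hfpos : (0:ℝ) < (t.factorial : ℝ) := by exact_mod_cast t.factorial_pos
  have hapow : 0 < a^h := by
    rcases Nat.eq_zero_or_pos h with h0 | h0
    · simp [h0]
    · have hh0 : (0:ℝ) < (h:ℝ) := by exact_mod_cast h0
      have : 0 < a := by rw [ha_def]; positivity
      exact pow_pos this h
  have hbpow : 0 < b^(t-h) := by
    rcases Nat.eq_zero_or_pos (t-h) with h0 | h0
    · simp [h0]
    · have hh0 : (0:ℝ) < ((t-h:ℕ):ℝ) := by exact_mod_cast h0
      have : 0 < b := by rw [hb_def]; positivity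
      exact pow_pos this (t-h)
  have e1 : (h.factorial:ℝ) ≤ (2*(t:ℝ)+1) * ktN h := by
    refine le_trans (factorial_le_ktN h) ?_
    have hc : (h:ℝ) ≤ t := by exact_mod_cast hh
    nlinarith [ktN_pos h]
  have e2 : ((t-h).factorial:ℝ) ≤ (2*(t:ℝ)+1) * ktN (t-h) := by
    refine le_trans (factorial_le_ktN (t-h)) ?_
    have hc : ((t-h:ℕ):ℝ) ≤ t := by
      have : t - h ≤ t := Nat.sub_le t h
      exact_mod_cast this
    nlinarith [ktN_pos (t-h)]
  have c1 : (h.factorial:ℝ) * ((t-h).factorial:ℝ)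
      ≤ (2*(t:ℝ)+1)^2 * (ktN h * ktN (t-h)) := by
    have := mul_le_mul e1 e2 (by positivity) (mul_nonneg hT.le (ktN_pos h).le)
    nlinarith [this]
  have hfact : ((t.choose h : ℕ):ℝ) * (h.factorial:ℝ) * ((t-h).factorial:ℝ)
      = (t.factorial:ℝ) := by
    exact_mod_cast congrArg (fun n : ℕ => (n:ℝ)) (Nat.choose_mul_factorial_mul_factorial hh)
  have hpmf := pmf_le_one t h hh ht
  have c2 : a^h * b^(t-h) * (t.factorial:ℝ) ≤ (h.factorial:ℝ) * ((t-h).factorial:ℝ) := by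
    calc a^h * b^(t-h) * (t.factorial:ℝ)
        = ((t.choose h : ℕ):ℝ) * a^h * b^(t-h) * ((h.factorial:ℝ) * ((t-h).factorial:ℝ)) := by
          rw [← hfact]; ring
      _ ≤ 1 * ((h.factorial:ℝ) * ((t-h).factorial:ℝ)) :=
          mul_le_mul_of_nonneg_right hpmf (by positivity)
      _ = (h.factorial:ℝ) * ((t-h).factorial:ℝ) := by ring
  have key : a^h * b^(t-h) / (2*(t:ℝ)+1)^2 ≤ ktN h * ktN (t-h) / t.factorial := by
    rw [div_le_div_iff₀ (by positivity) hfpos]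
    calc a^h * b^(t-h) * (t.factorial:ℝ) ≤ (h.factorial:ℝ) * ((t-h).factorial:ℝ) := c2
      _ ≤ (2*(t:ℝ)+1)^2 * (ktN h * ktN (t-h)) := c1
      _ = ktN h * ktN (t-h) * (2*(t:ℝ)+1)^2 := by ring
  have hlog := Real.log_le_log (by positivity) key
  rw [Real.log_div (by positivity) (by positivity), Real.log_mul (ne_of_gt hapow) (ne_of_gt hbpow),
    Real.log_pow, Real.log_pow, Real.log_pow] at hlog
  push_cast at hlog ⊢
  linarith

/-- Width bound for the betting confidence sequence: there is a universal
constant `C` such that for all `t ≥ 2` and `α ∈ (0,1)`, the confidence interval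
`{p ∈ (0,1) : logQ_t - H log p - (t-H) log(1-p) ≤ log(1/α)}` produced by the KT betting
scheme (with `H` the number of ones among `x₀,...,x_{t-1}` and `logQ_t` the KT log-wealth)
has width at most `C·√((log(1/α) + log t)/t)`. -/
theorem betting_cs_width_bound :
    ∃ C : ℝ, 0 < C ∧ ∀ (t : ℕ) (x : ℕ → ℝ) (α : ℝ), 2 ≤ t →
      (∀ τ, x τ = 0 ∨ x τ = 1) → α ∈ Set.Ioo (0 : ℝ) 1 →
      ∀ p ∈ Set.Ioo (0 : ℝ) 1, ∀ q ∈ Set.Ioo (0 : ℝ) 1,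
        (∑ τ ∈ Finset.range t,
            (x τ * Real.log (((∑ s ∈ Finset.range τ, x s) + 1 / 2) / (τ + 1))
              + (1 - x τ) * Real.log (1 - ((∑ s ∈ Finset.range τ, x s) + 1 / 2) / (τ + 1))))
          - (∑ τ ∈ Finset.range t, x τ) * Real.log p
          - ((t : ℝ) - ∑ τ ∈ Finset.range t, x τ) * Real.log (1 - p) ≤ Real.log (1 / α) →
        (∑ τ ∈ Finset.range t,
            (x τ * Real.log (((∑ s ∈ Finset.range τ, x s) + 1 / 2) / (τ + 1))
              + (1 - x τ) * Real.log (1 - ((∑ s ∈ Finset.range τ, x s) + 1 / 2) / (τ + 1))))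
          - (∑ τ ∈ Finset.range t, x τ) * Real.log q
          - ((t : ℝ) - ∑ τ ∈ Finset.range t, x τ) * Real.log (1 - q) ≤ Real.log (1 / α) →
        |p - q| ≤ C * Real.sqrt ((Real.log (1 / α) + Real.log t) / t) := by
  refine ⟨10, by norm_num, ?_⟩
  intro t x α ht hx hα p hp q hq hP hQ
  obtain ⟨h, hht, hsum, hS⟩ := wealth_eq x hx t
  have ht2 : (2:ℝ) ≤ (t:ℝ) := by exact_mod_cast ht
  have htR : (0:ℝ) < (t:ℝ) := by linarith
  set L : ℝ := Real.log (1/α) with hL_def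
  have hL : 0 < L := by
    apply Real.log_pos
    rw [lt_div_iff₀ hα.1]
    linarith [hα.2]
  have hlogt : 0 < Real.log t := Real.log_pos (by linarith)
  have hcast : ((t-h:ℕ):ℝ) = (t:ℝ) - (h:ℝ) := by
    push_cast [Nat.cast_sub hht]; ring
  set a : ℝ := (h:ℝ)/(t:ℝ) with ha_def
  have ha0 : 0 ≤ a := by positivity
  have ha1 : a ≤ 1 := by
    rw [ha_def, div_le_one htR]
    exact_mod_cast hht
  have h1a : 1 - a = ((t-h:ℕ):ℝ)/(t:ℝ) := by
    rw [ha_def, hcast]; field_simp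
  set R : ℝ := (L + Real.log t)/(t:ℝ) with hR_def
  have hR0 : 0 ≤ R := by positivity
  have hsqrt25 : Real.sqrt (25*R) = 5 * Real.sqrt R := by
    rw [show (25:ℝ) = 5^2 by norm_num, Real.sqrt_mul (by positivity), Real.sqrt_sq (by norm_num)]
  -- bound on log(2t+1)
  have hlog2t : Real.log (2*(t:ℝ)+1) ≤ 3 * Real.log t := by
    have h2t : (2*(t:ℝ)+1) ≤ (t:ℝ)^3 := by
      have c1 : (4:ℝ) ≤ (t:ℝ)^2 := by nlinarith
      have c2 : (t:ℝ)*4 ≤ (t:ℝ)*(t:ℝ)^2 := mul_le_mul_of_nonneg_left c1 htR.le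
      nlinarith [c2]
    calc Real.log (2*(t:ℝ)+1) ≤ Real.log ((t:ℝ)^3) := Real.log_le_log (by positivity) h2t
      _ = 3 * Real.log t := by rw [Real.log_pow]; norm_num
  have main : ∀ r ∈ Set.Ioo (0:ℝ) 1,
      Real.log (ktN h * ktN (t-h) / t.factorial) - (h:ℝ) * Real.log r
        - ((t:ℝ) - (h:ℝ)) * Real.log (1-r) ≤ L →
      |a - r| ≤ 5 * Real.sqrt R := by
    intro r hr hyp
    have hreg := kt_regret t h hht (by omega)
    -- combine with hypothesis
    have E1 : (h:ℝ) * Real.log ((h:ℝ)/t) + ((t-h:ℕ):ℝ) * Real.log (((t-h:ℕ):ℝ)/t)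
        - (h:ℝ) * Real.log r - ((t-h:ℕ):ℝ) * Real.log (1-r)
        ≤ L + 2 * Real.log (2*(t:ℝ)+1) := by
      rw [← hcast] at hyp
      linarith [hreg, hyp]
    have hpin := pinsker_quarter a r ⟨ha0, ha1⟩ hr
    have hmul := mul_le_mul_of_nonneg_left hpin htR.le
    have hta : (t:ℝ) * a = (h:ℝ) := by rw [ha_def]; field_simp
    have htb : (t:ℝ) * (1-a) = ((t-h:ℕ):ℝ) := by rw [h1a]; field_simp
    have hrw : (t:ℝ) * (a * Real.log a + (1-a) * Real.log (1-a)
          - a * Real.log r - (1-a) * Real.log (1-r))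
        = (h:ℝ) * Real.log ((h:ℝ)/t) + ((t-h:ℕ):ℝ) * Real.log (((t-h:ℕ):ℝ)/t)
          - (h:ℝ) * Real.log r - ((t-h:ℕ):ℝ) * Real.log (1-r) := by
      have l1 : Real.log (1-a) = Real.log (((t-h:ℕ):ℝ)/(t:ℝ)) := by rw [h1a]
      rw [l1, ← ha_def]
      linear_combination (Real.log a - Real.log r) * hta
        + (Real.log (((t-h:ℕ):ℝ)/(t:ℝ)) - Real.log (1-r)) * htb
    have E2 : (t:ℝ) * ((a-r)^2/4) ≤ L + 2 * Real.log (2*(t:ℝ)+1) := by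
      calc (t:ℝ) * ((a-r)^2/4)
          ≤ (t:ℝ) * (a * Real.log a + (1-a) * Real.log (1-a)
              - a * Real.log r - (1-a) * Real.log (1-r)) := hmul
        _ = _ := hrw
        _ ≤ L + 2 * Real.log (2*(t:ℝ)+1) := E1
    have e : (a-r)^2 * (t:ℝ) = 4*((t:ℝ)*((a-r)^2/4)) := by ring
    have E3 : (a-r)^2 * (t:ℝ) ≤ 25*(L + Real.log t) := by
      rw [e]; linarith [E2, hlog2t, hL, hlogt]
    have E4 : (a-r)^2 ≤ 25*R := by
      rw [hR_def, mul_div_assoc']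
      exact (le_div_iff₀ htR).mpr E3
    calc |a - r| ≤ Real.sqrt (25*R) := Real.abs_le_sqrt E4
      _ = 5 * Real.sqrt R := hsqrt25
  rw [hS, hsum] at hP hQ
  have b1 := main p hp hP
  have b2 := main q hq hQ
  calc |p - q| = |(a - q) - (a - p)| := by congr 1; ring
    _ ≤ |a - q| + |a - p| := abs_sub _ _
    _ ≤ 10 * Real.sqrt R := by linarith
end
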